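/- For every t > 0, every time-labelled ternary tree T compatible with horizon t, and all z₁ ≤ z₂ in ℝ, one has P^t_{z₁}(T) ≤ P^t_{z₂}(T). -/

import Mathlib

open MeasureTheory

/-- Density of the normal distribution `N(m, v)` (`v` the variance). -/
noncomputable def gauss (m v x : ℝ) : ℝ :=
  (Real.sqrt (2 * Real.pi * v))⁻¹ * Real.exp (-(x - m) ^ 2 / (2 * v))

/-- The majority-vote probability for three independent Bernoulli votes
with success probabilities `p₁, p₂, p₃`. -/
noncomputable def g3 (p₁ p₂ p₃ : ℝ) : ℝ :=
  p₁ * p₂ * p₃ + p₁ * p₂ * (1 - p₃) + p₂ * p₃ * (1 - p₁) + p₃ * p₁ * (1 - p₂)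

/-- A time-labelled ternary tree: either a leaf, or a branch node carrying a
waiting time `τ` and three subtrees. -/
inductive TTree where
  | leaf : TTree
  | node (τ : ℝ) (T₁ T₂ T₃ : TTree) : TTree

/-- `T.compat t`: all waiting times are positive and along every root-to-leaf path
the waiting times sum to strictly less than the horizon `t` (in particular `t > 0`). -/
def TTree.compat : TTree → ℝ → Prop
  | .leaf, t => 0 < t
  | .node τ T₁ T₂ T₃, t =>
      0 < τ ∧ τ < t ∧ T₁.compat (t - τ) ∧ T₂.compat (t - τ) ∧ T₃.compat (t - τ)

/-- The voting probability `P^t_z(T)`: recursively, a leaf contributes the probability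
that a rate-2 Brownian motion started at `z` is `≥ 0` at time `t`, and a branch node
averages the majority vote of its three subtrees over the position at the branch time. -/
noncomputable def voteP : TTree → ℝ → ℝ → ℝ
  | .leaf, t, z => ∫ y in Set.Ioi (0 : ℝ), gauss z (2 * t) y
  | .node τ T₁ T₂ T₃, t, z =>
      ∫ y : ℝ, g3 (voteP T₁ (t - τ) y) (voteP T₂ (t - τ) y) (voteP T₃ (t - τ) y)
        * gauss z (2 * τ) y

/-!
Translation invariance of Lebesgue measure turns the Gaussian average of `F` centred at `z` into
the average of `F (· + z)` against a fixed centred Gaussian, so Gaussian averaging preserves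
monotonicity and values in `[0, 1]`. The majority function `g3` is nondecreasing in each argument
on `[0, 1]³` (its partial derivative in `p₁` is `p₂ (1 - p₃) + p₃ (1 - p₂)`), so both properties
propagate from the leaves to the root by induction on the tree.
-/

open ProbabilityTheory Set
open scoped NNReal

lemma gauss_eq_gaussianPDFReal (m : ℝ) {v : ℝ} (hv : 0 ≤ v) :
    gauss m v = gaussianPDFReal m v.toNNReal := by
  ext x
  simp [gauss, gaussianPDFReal, Real.coe_toNNReal v hv]

lemma integral_mul_gauss_eq_integral_gaussianReal (F : ℝ → ℝ) (m : ℝ) {v : ℝ} (hv : 0 < v) :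
    ∫ y, F y * gauss m v y = ∫ y, F y ∂gaussianReal m v.toNNReal := by
  rw [integral_gaussianReal_eq_integral_smul (by simpa using hv), gauss_eq_gaussianPDFReal m hv.le]
  simp_rw [smul_eq_mul, mul_comm]

lemma integral_mem_Icc_of_mem_Icc {Ω : Type*} [MeasurableSpace Ω] (μ : Measure Ω)
    [IsProbabilityMeasure μ] {F : Ω → ℝ} (hF : Measurable F) (hF01 : ∀ y, F y ∈ Icc 0 1) :
    ∫ y, F y ∂μ ∈ Icc 0 1 := by
  have hint : Integrable F μ :=
    .of_bound hF.aestronglyMeasurable 1 (.of_forall fun y => by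
      rw [Real.norm_of_nonneg (hF01 y).1]; exact (hF01 y).2)
  refine ⟨integral_nonneg fun y => (hF01 y).1, ?_⟩
  calc ∫ y, F y ∂μ ≤ ∫ _, 1 ∂μ := integral_mono hint (integrable_const 1) fun y => (hF01 y).2
    _ = 1 := by simp

lemma monotone_integral_gaussianReal {F : ℝ → ℝ} (hF : Monotone F) {C : ℝ}
    (hC : ∀ y, ‖F y‖ ≤ C) (v : ℝ≥0) :
    Monotone fun m => ∫ y, F y ∂gaussianReal m v := by
  have hshift (m : ℝ) : ∫ y, F y ∂gaussianReal m v = ∫ x, F (x + m) ∂gaussianReal 0 v := by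
    rw [← integral_map (φ := (· + m)) (by fun_prop) hF.measurable.aestronglyMeasurable,
      gaussianReal_map_add_const, zero_add]
  have hint (m : ℝ) : Integrable (fun x => F (x + m)) (gaussianReal 0 v) :=
    .of_bound (hF.measurable.comp (measurable_add_const m)).aestronglyMeasurable C
      (.of_forall fun x => hC _)
  intro m₁ m₂ hm
  simp only [hshift]
  exact integral_mono (hint m₁) (hint m₂) fun x => hF (by linarith)

lemma integral_mul_gauss_mem_Icc_and_monotone {F : ℝ → ℝ} (hF : Monotone F)
    (hF01 : ∀ y, F y ∈ Icc 0 1) {v : ℝ} (hv : 0 < v) :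
    (∀ m, ∫ y, F y * gauss m v y ∈ Icc 0 1) ∧ Monotone fun m => ∫ y, F y * gauss m v y := by
  simp only [integral_mul_gauss_eq_integral_gaussianReal F _ hv]
  refine ⟨fun m => integral_mem_Icc_of_mem_Icc _ hF.measurable hF01,
    monotone_integral_gaussianReal hF (C := 1) (fun y => ?_) _⟩
  rw [Real.norm_of_nonneg (hF01 y).1]
  exact (hF01 y).2

lemma g3_rotate (p₁ p₂ p₃ : ℝ) : g3 p₁ p₂ p₃ = g3 p₂ p₃ p₁ := by
  unfold g3; ring

lemma g3_le_g3_left {p q p₂ p₃ : ℝ} (h₂ : p₂ ∈ Icc (0 : ℝ) 1) (h₃ : p₃ ∈ Icc (0 : ℝ) 1)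
    (hpq : p ≤ q) : g3 p p₂ p₃ ≤ g3 q p₂ p₃ := by
  have hdiff : g3 q p₂ p₃ - g3 p p₂ p₃ = (q - p) * (p₂ * (1 - p₃) + p₃ * (1 - p₂)) := by
    unfold g3; ring
  rw [← sub_nonneg, hdiff]
  exact mul_nonneg (sub_nonneg.2 hpq)
    (add_nonneg (mul_nonneg h₂.1 (sub_nonneg.2 h₃.2)) (mul_nonneg h₃.1 (sub_nonneg.2 h₂.2)))

lemma g3_mono {p₁ p₂ p₃ q₁ q₂ q₃ : ℝ} (hp₂ : p₂ ∈ Icc (0 : ℝ) 1) (hp₃ : p₃ ∈ Icc (0 : ℝ) 1)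
    (hq₁ : q₁ ∈ Icc (0 : ℝ) 1) (hq₂ : q₂ ∈ Icc (0 : ℝ) 1)
    (h₁ : p₁ ≤ q₁) (h₂ : p₂ ≤ q₂) (h₃ : p₃ ≤ q₃) : g3 p₁ p₂ p₃ ≤ g3 q₁ q₂ q₃ :=
  calc g3 p₁ p₂ p₃ ≤ g3 q₁ p₂ p₃ := g3_le_g3_left hp₂ hp₃ h₁
    _ = g3 p₂ p₃ q₁ := g3_rotate ..
    _ ≤ g3 q₂ p₃ q₁ := g3_le_g3_left hp₃ hq₁ h₂
    _ = g3 p₃ q₁ q₂ := g3_rotate ..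
    _ ≤ g3 q₃ q₁ q₂ := g3_le_g3_left hq₁ hq₂ h₃
    _ = g3 q₁ q₂ q₃ := g3_rotate ..

lemma g3_mem_Icc {p₁ p₂ p₃ : ℝ} (h₁ : p₁ ∈ Icc (0 : ℝ) 1) (h₂ : p₂ ∈ Icc (0 : ℝ) 1)
    (h₃ : p₃ ∈ Icc (0 : ℝ) 1) : g3 p₁ p₂ p₃ ∈ Icc 0 1 := by
  have h0 : (0 : ℝ) ∈ Icc (0 : ℝ) 1 := left_mem_Icc.2 zero_le_one
  have h1 : (1 : ℝ) ∈ Icc (0 : ℝ) 1 := right_mem_Icc.2 zero_le_one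
  constructor
  · simpa [g3] using g3_mono h0 h0 h₁ h₂ h₁.1 h₂.1 h₃.1
  · simpa [g3] using g3_mono h₂ h₃ h1 h1 h₁.2 h₂.2 h₃.2

lemma monotone_indicator_Ioi_zero : Monotone ((Ioi (0 : ℝ)).indicator (1 : ℝ → ℝ)) := by
  intro a b hab
  by_cases ha : a ∈ Ioi 0
  · rw [indicator_of_mem ha, indicator_of_mem (mem_Ioi.2 (mem_Ioi.1 ha |>.trans_le hab))]
    rfl
  · rw [indicator_of_notMem ha]
    exact indicator_nonneg (fun _ _ => zero_le_one) b

lemma voteP_leaf_eq (t : ℝ) :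
    voteP .leaf t = fun z => ∫ y, (Ioi (0 : ℝ)).indicator 1 y * gauss z (2 * t) y := by
  ext z
  rw [voteP, ← integral_indicator measurableSet_Ioi]
  congr with y
  by_cases hy : 0 < y <;> simp [indicator, hy]

theorem voteP_mem_Icc_and_monotone {T : TTree} {t : ℝ} (hT : T.compat t) :
    (∀ z, voteP T t z ∈ Icc 0 1) ∧ Monotone (voteP T t) := by
  induction T generalizing t with
  | leaf =>
    rw [voteP_leaf_eq t]
    refine integral_mul_gauss_mem_Icc_and_monotone monotone_indicator_Ioi_zero (fun y => ?_)
      (mul_pos two_pos hT)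
    by_cases hy : 0 < y <;> simp [indicator, hy]
  | node τ T₁ T₂ T₃ ih₁ ih₂ ih₃ =>
    obtain ⟨hτ, -, hT₁, hT₂, hT₃⟩ := hT
    obtain ⟨mem₁, mono₁⟩ := ih₁ hT₁
    obtain ⟨mem₂, mono₂⟩ := ih₂ hT₂
    obtain ⟨mem₃, mono₃⟩ := ih₃ hT₃
    exact integral_mul_gauss_mem_Icc_and_monotone
      (fun a b hab =>
        g3_mono (mem₂ a) (mem₃ a) (mem₁ b) (mem₂ b) (mono₁ hab) (mono₂ hab) (mono₃ hab))
      (fun y => g3_mem_Icc (mem₁ y) (mem₂ y) (mem₃ y)) (by positivity)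

theorem voteP_monotone_general (t : ℝ) (T : TTree) (hT : T.compat t)
    (z₁ z₂ : ℝ) (hz : z₁ ≤ z₂) :
    voteP T t z₁ ≤ voteP T t z₂ :=
  (voteP_mem_Icc_and_monotone hT).2 hz

theorem voteP_monotone (t : ℝ) (ht : 0 < t) (T : TTree) (hT : T.compat t)
    (z₁ z₂ : ℝ) (hz : z₁ ≤ z₂) :
    voteP T t z₁ ≤ voteP T t z₂ :=
  voteP_monotone_general t T hT z₁ z₂ hz
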